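/- Let C be a cyclic code of length n over R = F_p[u,v]/⟨u^k, v², uv−vu⟩, viewed as an ideal of R[x]/⟨xⁿ−1⟩, with associated torsion codes C₁,…,C_{2k} over F_p, where C_i = ⟨g_i(x)⟩ ⊆ F_p[x]/⟨xⁿ−1⟩. Then g_{2k}(x) | g_{2k−1}(x) | ⋯ | g_{k+1}(x) and g_k(x) | g_{k−1}(x) | ⋯ | g₁(x) | (xⁿ−1) in F_p[x], and moreover g_{k+i}(x) | g_i(x) for all 1 ≤ i ≤ k. -/

import Mathlib

open Polynomial

/-- The ring `F_p[u,v]/⟨u^k, v²⟩` (the variables commute, so `uv - vu = 0` is automatic). -/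
abbrev Rbase (p k : ℕ) : Type :=
  MvPolynomial (Fin 2) (ZMod p) ⧸
    Ideal.span {(MvPolynomial.X 0 : MvPolynomial (Fin 2) (ZMod p)) ^ k, MvPolynomial.X 1 ^ 2}

noncomputable instance (p k : ℕ) : CommRing (Rbase p k) := Ideal.Quotient.commRing _

/-- The image of `u`. -/
noncomputable def uu (p k : ℕ) : Rbase p k := Ideal.Quotient.mk _ (MvPolynomial.X 0)

/-- The image of `v`. -/
noncomputable def vv (p k : ℕ) : Rbase p k := Ideal.Quotient.mk _ (MvPolynomial.X 1)

/-- `R_n = (F_p[u,v]/⟨u^k,v²⟩)[x]/⟨xⁿ−1⟩`, the ambient ring of cyclic codes of length `n`. -/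
abbrev Rn (p k n : ℕ) : Type :=
  Polynomial (Rbase p k) ⧸
    Ideal.span {(Polynomial.X : Polynomial (Rbase p k)) ^ n - 1}

noncomputable def uR (p k n : ℕ) : Rn p k n := Ideal.Quotient.mk _ (Polynomial.C (uu p k))
noncomputable def vR (p k n : ℕ) : Rn p k n := Ideal.Quotient.mk _ (Polynomial.C (vv p k))
noncomputable def xR (p k n : ℕ) : Rn p k n := Ideal.Quotient.mk _ Polynomial.X

/-- The canonical map `F_p[x] → R_n` (coefficientwise inclusion followed by the quotient map). -/
noncomputable def theta (p k n : ℕ) : Polynomial (ZMod p) →+* Rn p k n :=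
  (Ideal.Quotient.mk _).comp (Polynomial.mapRingHom (algebraMap (ZMod p) (Rbase p k)))

/-- The set of `f ∈ F_p[x]` representing elements of
`C_i = Tor Res … Res (C) = {f : u^{i-1}·f ∈ C mod ⟨u^i, v⟩}`. -/
def resTorSet (p k n : ℕ) (C : Ideal (Rn p k n)) (i : ℕ) : Set (Polynomial (ZMod p)) :=
  {f | uR p k n ^ (i - 1) * theta p k n f ∈
        C ⊔ Ideal.span {uR p k n ^ i, vR p k n}}

/-- The set of `f ∈ F_p[x]` representing elements of
`C_{k+i} = Tor Res … Res Tor (C) = {f : u^{i-1}·v·f ∈ C mod ⟨u^i v⟩}`. -/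
def torTorSet (p k n : ℕ) (C : Ideal (Rn p k n)) (i : ℕ) : Set (Polynomial (ZMod p)) :=
  {f | uR p k n ^ (i - 1) * vR p k n * theta p k n f ∈
        C ⊔ Ideal.span {uR p k n ^ i * vR p k n}}

/-- `g` is the (monic, minimal-degree) generator of the ideal of `F_p[x]/⟨xⁿ−1⟩` whose set
of polynomial representatives is `S`. -/
def IsMinGen (p n : ℕ) (S : Set (Polynomial (ZMod p))) (g : Polynomial (ZMod p)) : Prop :=
  g.Monic ∧
  S = {f | ∃ a b : Polynomial (ZMod p), f = g * a + (Polynomial.X ^ n - 1) * b} ∧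
  ∀ f ∈ S, f ≠ 0 → g.degree ≤ f.degree

/-- The canonical generator
`A_i = u^{i-1}g_i + u^i g_{ii} + ⋯ + u^{k-1}g_{i(k-1)} + v(g_{ik} + ⋯ + u^{k-1}g_{i(2k-1)})`
as a polynomial over `F_p[u,v]/⟨u^k,v²⟩`, for `1 ≤ i ≤ k`. -/
noncomputable def Apoly (p k : ℕ) (g : ℕ → Polynomial (ZMod p))
    (gg : ℕ → ℕ → Polynomial (ZMod p)) (i : ℕ) : Polynomial (Rbase p k) :=
  Polynomial.C (uu p k ^ (i - 1)) * (g i).map (algebraMap (ZMod p) (Rbase p k))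
    + ∑ j ∈ Finset.Icc i (k - 1),
        Polynomial.C (uu p k ^ j) * (gg i j).map (algebraMap (ZMod p) (Rbase p k))
    + Polynomial.C (vv p k) *
        ∑ j ∈ Finset.Icc k (2 * k - 1),
          Polynomial.C (uu p k ^ (j - k)) * (gg i j).map (algebraMap (ZMod p) (Rbase p k))

/-- The canonical generator
`A_{k+i} = v(u^{i-1}g_{k+i} + u^i g_{(k+i)(k+i)} + ⋯ + u^{k-1}g_{(k+i)(2k-1)})`
as a polynomial over `F_p[u,v]/⟨u^k,v²⟩`, for `1 ≤ i ≤ k`. -/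
noncomputable def AVpoly (p k : ℕ) (g : ℕ → Polynomial (ZMod p))
    (gg : ℕ → ℕ → Polynomial (ZMod p)) (i : ℕ) : Polynomial (Rbase p k) :=
  Polynomial.C (vv p k) *
    (Polynomial.C (uu p k ^ (i - 1)) * (g (k + i)).map (algebraMap (ZMod p) (Rbase p k))
      + ∑ j ∈ Finset.Icc (k + i) (2 * k - 1),
          Polynomial.C (uu p k ^ (j - k)) * (gg (k + i) j).map (algebraMap (ZMod p) (Rbase p k)))

/-- `A_i` as an element of `R_n`. -/
noncomputable def Aelt (p k n : ℕ) (g : ℕ → Polynomial (ZMod p))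
    (gg : ℕ → ℕ → Polynomial (ZMod p)) (i : ℕ) : Rn p k n :=
  Ideal.Quotient.mk _ (Apoly p k g gg i)

/-- `A_{k+i}` as an element of `R_n`. -/
noncomputable def AVelt (p k n : ℕ) (g : ℕ → Polynomial (ZMod p))
    (gg : ℕ → ℕ → Polynomial (ZMod p)) (i : ℕ) : Rn p k n :=
  Ideal.Quotient.mk _ (AVpoly p k g gg i)

/-- The minimum Hamming weight of a nonzero codeword of `C ⊆ R_n` (weights are computed
on the unique representative of degree `< n`). -/
noncomputable def dHam (p k n : ℕ) (C : Ideal (Rn p k n)) : ℕ :=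
  sInf {m | ∃ f : Polynomial (Rbase p k), f ≠ 0 ∧ f.degree < (n : ℕ) ∧
    Ideal.Quotient.mk (Ideal.span {(Polynomial.X : Polynomial (Rbase p k)) ^ n - 1}) f ∈ C ∧
    m = f.support.card}

/-- The minimum Hamming weight of a nonzero codeword of a cyclic code over `F_p` given by a
set `S` of polynomial representatives (closed under adding multiples of `xⁿ−1`). -/
noncomputable def dHamF (p n : ℕ) (S : Set (Polynomial (ZMod p))) : ℕ :=
  sInf {m | ∃ f : Polynomial (ZMod p), f ≠ 0 ∧ f.degree < (n : ℕ) ∧ f ∈ S ∧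
    m = f.support.card}

/-!
Each torsion code contains the previous one: multiplying a witness `u^{i-1} f ∈ C + ⟨u^i, v⟩`
by `u` gives `u^i f ∈ C + ⟨u^{i+1}, v⟩`, similarly for the `v`-torsion codes, and multiplying
it by `v` gives `u^{i-1} v f ∈ C + ⟨u^i v⟩` because `v² = 0`. Since the minimal generator of a
cyclic code divides `xⁿ − 1`, every element of the code is a multiple of it, so inclusion of
codes turns into reverse divisibility of their generators.
-/

section MemSup

variable {A : Type*} [CommRing A] {I : Ideal A} {a b x : A}

theorem Ideal.mul_mem_sup_span_singleton (y : A) (h : x ∈ I ⊔ Ideal.span {a}) :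
    y * x ∈ I ⊔ Ideal.span {y * a} := by
  obtain ⟨c, hc, s, hs, rfl⟩ := Submodule.mem_sup.1 h
  obtain ⟨α, rfl⟩ := Ideal.mem_span_singleton'.1 hs
  exact Submodule.mem_sup.2 ⟨y * c, I.mul_mem_left y hc, α * (y * a),
    Ideal.mul_mem_left _ _ (Ideal.mem_span_singleton_self _), by ring⟩

theorem Ideal.mul_mem_sup_span_pair (y : A) (h : x ∈ I ⊔ Ideal.span {a, b}) :
    y * x ∈ I ⊔ Ideal.span {y * a, b} := by
  obtain ⟨c, hc, s, hs, rfl⟩ := Submodule.mem_sup.1 h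
  obtain ⟨α, β, rfl⟩ := Ideal.mem_span_pair.1 hs
  exact Submodule.mem_sup.2 ⟨y * c, I.mul_mem_left y hc, α * (y * a) + (β * y) * b,
    Ideal.mem_span_pair.2 ⟨α, β * y, rfl⟩, by ring⟩

theorem Ideal.mul_mem_sup_span_of_mul_self_eq_zero (h : x ∈ I ⊔ Ideal.span {a, b})
    (hb : b * b = 0) : b * x ∈ I ⊔ Ideal.span {b * a} := by
  obtain ⟨c, hc, s, hs, rfl⟩ := Submodule.mem_sup.1 h
  obtain ⟨α, β, rfl⟩ := Ideal.mem_span_pair.1 hs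
  exact Submodule.mem_sup.2 ⟨b * c, I.mul_mem_left b hc, α * (b * a),
    Ideal.mul_mem_left _ _ (Ideal.mem_span_singleton_self _),
    by linear_combination -β * hb⟩

end MemSup

theorem vR_mul_self (p k n : ℕ) : vR p k n * vR p k n = 0 := by
  have hv : vv p k * vv p k = 0 := by
    rw [vv, ← map_mul, ← pow_two, Ideal.Quotient.eq_zero_iff_mem]
    exact Ideal.subset_span (by simp)
  rw [vR, ← map_mul, ← C_mul, hv, C_0, map_zero]

section TorsionCodes

variable {p k n : ℕ} (C : Ideal (Rn p k n))

theorem resTorSet_subset_succ {i : ℕ} (hi : i ≠ 0) :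
    resTorSet p k n C i ⊆ resTorSet p k n C (i + 1) := by
  obtain ⟨j, rfl⟩ := Nat.exists_eq_add_one_of_ne_zero hi
  intro f hf
  have key := Ideal.mul_mem_sup_span_pair (uR p k n) (show _ ∈ C ⊔ _ from hf)
  simp only [resTorSet, Nat.add_sub_cancel, ← mul_assoc, ← pow_succ'] at key ⊢
  exact key

theorem torTorSet_subset_succ {i : ℕ} (hi : i ≠ 0) :
    torTorSet p k n C i ⊆ torTorSet p k n C (i + 1) := by
  obtain ⟨j, rfl⟩ := Nat.exists_eq_add_one_of_ne_zero hi
  intro f hf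
  have key := Ideal.mul_mem_sup_span_singleton (uR p k n) (show _ ∈ C ⊔ _ from hf)
  simp only [torTorSet, Nat.add_sub_cancel, ← mul_assoc, ← pow_succ'] at key ⊢
  exact key

theorem resTorSet_subset_torTorSet (i : ℕ) : resTorSet p k n C i ⊆ torTorSet p k n C i := by
  intro f hf
  have key := Ideal.mul_mem_sup_span_of_mul_self_eq_zero (A := Rn p k n)
    (show _ ∈ C ⊔ _ from hf) (vR_mul_self p k n)
  show _ ∈ C ⊔ _
  rwa [mul_comm (uR p k n ^ i), show uR p k n ^ (i - 1) * vR p k n * theta p k n f =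
    vR p k n * (uR p k n ^ (i - 1) * theta p k n f) by ring]

end TorsionCodes

section IsMinGen

variable {p n : ℕ} {S T : Set (Polynomial (ZMod p))} {g h : Polynomial (ZMod p)}

theorem IsMinGen.mem (hg : IsMinGen p n S g) : g ∈ S := by
  rw [hg.2.1]
  exact ⟨1, 0, by ring⟩

theorem IsMinGen.dvd_X_pow_sub_one (hg : IsMinGen p n S g) :
    g ∣ (X ^ n - 1 : Polynomial (ZMod p)) := by
  nontriviality ZMod p
  obtain ⟨hmonic, hS, hmin⟩ := hg
  rw [← modByMonic_eq_zero_iff_dvd hmonic]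
  by_contra hr
  -- the remainder of `xⁿ − 1` lies in the code and has smaller degree than `g`
  have hmem : (X ^ n - 1 : Polynomial (ZMod p)) %ₘ g ∈ S := by
    rw [hS]
    exact ⟨-((X ^ n - 1) /ₘ g), 1, by linear_combination modByMonic_add_div (X ^ n - 1) g⟩
  exact (hmin _ hmem hr).not_gt (degree_modByMonic_lt _ hmonic)

theorem IsMinGen.dvd_of_mem (hg : IsMinGen p n S g) {f : Polynomial (ZMod p)} (hf : f ∈ S) :
    g ∣ f := by
  rw [hg.2.1] at hf
  obtain ⟨a, b, rfl⟩ := hf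
  exact dvd_add (dvd_mul_right _ _) (hg.dvd_X_pow_sub_one.mul_right b)

theorem IsMinGen.dvd_of_subset (hg : IsMinGen p n S g) (hh : IsMinGen p n T h) (hST : S ⊆ T) :
    h ∣ g :=
  hh.dvd_of_mem (hST hg.mem)

end IsMinGen

theorem stmt6 (p k n : ℕ) (hk : 0 < k)
    (C : Ideal (Rn p k n)) (g : ℕ → Polynomial (ZMod p))
    (hres : ∀ i ∈ Finset.Icc 1 k, IsMinGen p n (resTorSet p k n C i) (g i))
    (htor : ∀ i ∈ Finset.Icc 1 k, IsMinGen p n (torTorSet p k n C i) (g (k + i))) :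
    (∀ i ∈ Finset.Icc 1 (k - 1), g (i + 1) ∣ g i) ∧
    (∀ i ∈ Finset.Icc (k + 1) (2 * k - 1), g (i + 1) ∣ g i) ∧
    g 1 ∣ (Polynomial.X ^ n - 1 : Polynomial (ZMod p)) ∧
    (∀ i ∈ Finset.Icc 1 k, g (k + i) ∣ g i) := by
  refine ⟨fun i hi => ?_, fun i hi => ?_, ?_, fun i hi => ?_⟩
  · obtain ⟨hi₁, hi₂⟩ := Finset.mem_Icc.1 hi
    exact (hres i (Finset.mem_Icc.2 ⟨hi₁, by omega⟩)).dvd_of_subset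
      (hres (i + 1) (Finset.mem_Icc.2 ⟨by omega, by omega⟩)) (resTorSet_subset_succ C (by omega))
  · obtain ⟨hi₁, hi₂⟩ := Finset.mem_Icc.1 hi
    obtain ⟨j, rfl⟩ : ∃ j, i = k + j := ⟨i - k, by omega⟩
    exact (htor j (Finset.mem_Icc.2 ⟨by omega, by omega⟩)).dvd_of_subset
      (htor (j + 1) (Finset.mem_Icc.2 ⟨by omega, by omega⟩)) (torTorSet_subset_succ C (by omega))
  · exact (hres 1 (Finset.mem_Icc.2 ⟨le_rfl, hk⟩)).dvd_X_pow_sub_one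
  · exact (hres i hi).dvd_of_subset (htor i hi) (resTorSet_subset_torTorSet C i)
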